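/- Let m be a positive integer and n a nonzero integer, and let x, y be real numbers with |x| ≤ 2 and φ(x,y) = 0, where φ(x,y) = S_{n-1}(λ)·α - S_{n-2}(λ) with λ = x^2 - y - (y-2)(y+2-x^2)·S_m(y)·S_{m-1}(y) and α = 1 + (y+2-x^2)·S_{m-1}(y)·(S_m(y) - S_{m-1}(y)). If |x| > 2·√(1 - 1/(2n^2 + 2|n|·√(4m(m+1)+n^2))), then y > 2. -/

import Mathlib

open Real

/-- Auxiliary sequence for the Chebyshev-like polynomials on natural indices. -/
def Saux {R : Type*} [CommRing R] : ℕ → R → R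
  | 0, _ => 1
  | 1, z => z
  | (n + 2), z => z * Saux (n + 1) z - Saux n z

/-- The Chebyshev-like polynomials `S j` indexed by all integers `j`:
`S 0 z = 1`, `S 1 z = z`, and `S (j + 1) z = z * S j z - S (j - 1) z` for all `j : ℤ`
(so `S (-1) z = 0`, `S (-2) z = -1`, and in general `S (-j) z = -S (j - 2) z`). -/
def S {R : Type*} [CommRing R] (j : ℤ) (z : R) : R :=
  if 0 ≤ j then Saux j.toNat z
  else if j = -1 then 0
  else -Saux (-j - 2).toNat z

/-!
Write `a = S m y`, `b = S (m - 1) y`, `w = y + 2 - x ^ 2` and `u = S (n - 1) lam`. The Cassini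
identity `a ^ 2 + b ^ 2 - y a b = 1` gives `(a - b) ^ 2 = 1 - (2 - y) a b` and
`lam = 2 - w (a - b) ^ 2`; together with the Cassini identity at `lam`, the Riley equation
becomes `u ^ 2 * w (a - b) ^ 2 (1 + w a b) = 1`. Suppose `y ≤ 2`. If `w ≤ 0`, the left side is
`≤ 0`. If `w > 0`, then `|y| ≤ 2`, so `|a b| ≤ m (m + 1)`, and with `ε = 4 - x ^ 2` both
`w (a - b) ^ 2` and `w (a - b) ^ 2 (1 + w a b)` are at most `ε (1 + ε m (m + 1))`, which the
hypothesis on `|x|` makes smaller than `1 / n ^ 2`. Hence `|lam| ≤ 2`, so `u ^ 2 ≤ n ^ 2` by the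
bound `|S k z| ≤ |k + 1|` on `[-2, 2]`, and the left side is `< 1`.
-/

open Polynomial

namespace Polynomial.Chebyshev

theorem C_eq_S_sub_S (R : Type*) [CommRing R] (n : ℤ) : C R n = S R n - S R (n - 2) := by
  linear_combination C_eq_S_sub_X_mul_S R n + S_eq R n

variable {z : ℝ}

theorem abs_eval_C_real_le_two (hz : |z| ≤ 2) (n : ℤ) : |(C ℝ n).eval z| ≤ 2 := by
  have h := congrArg (eval (z / 2)) (C_comp_two_mul_X ℝ n)
  simp only [eval_comp, eval_mul, eval_ofNat, eval_X, mul_div_cancel₀ z two_ne_zero] at h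
  rw [h, abs_mul, abs_two]
  have := abs_eval_T_real_le_one n (x := z / 2) (by rw [abs_div, abs_two]; linarith)
  linarith

theorem abs_eval_S_real_natCast_le (hz : |z| ≤ 2) (k : ℕ) : |(S ℝ k).eval z| ≤ k + 1 := by
  induction k using Nat.twoStepInduction with
  | zero => simp
  | one => simpa using hz.trans (by norm_num)
  | more k ih _ =>
    have h := congrArg (eval z) (C_eq_S_sub_S ℝ (k + 2))
    simp only [eval_sub, add_sub_cancel_right] at h
    push_cast
    calc |(S ℝ (k + 2)).eval z| = |(S ℝ k).eval z + (C ℝ (k + 2)).eval z| := by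
          rw [h]; ring_nf
      _ ≤ (k + 1) + 2 := (abs_add_le _ _).trans (add_le_add ih (abs_eval_C_real_le_two hz _))
      _ = k + 2 + 1 := by ring

theorem abs_eval_S_real_le (hz : |z| ≤ 2) (n : ℤ) : |(S ℝ n).eval z| ≤ |(n : ℝ) + 1| := by
  obtain ⟨k, rfl | rfl⟩ := Int.eq_nat_or_neg n
  · simpa [abs_of_nonneg (by positivity : (0 : ℝ) ≤ k + 1)] using
      abs_eval_S_real_natCast_le hz k
  · rcases k with _ | _ | k
    · simp
    · simp
    · rw [show -((k + 2 : ℕ) : ℤ) = -(k : ℤ) - 2 by push_cast; ring, S_neg_sub_two, eval_neg,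
        abs_neg]
      push_cast
      rw [show -(k : ℝ) - 2 + 1 = -(k + 1) by ring, abs_neg,
        abs_of_nonneg (by positivity : (0 : ℝ) ≤ k + 1)]
      exact abs_eval_S_real_natCast_le hz k

end Polynomial.Chebyshev

section ChebyshevLike

variable {R : Type*} [CommRing R]

theorem Saux_eq_eval (k : ℕ) (z : R) : Saux k z = (Chebyshev.S R k).eval z := by
  induction k using Nat.twoStepInduction with
  | zero => simp [Saux]
  | one => simp [Saux]
  | more k ih₁ ih₂ =>
    rw [Saux, ih₁, ih₂]
    push_cast
    simp [Chebyshev.S_add_two]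

theorem S_eq_eval (j : ℤ) (z : R) : S j z = (Chebyshev.S R j).eval z := by
  unfold S
  split_ifs with h₀ h₁
  · rw [Saux_eq_eval, Int.toNat_of_nonneg h₀]
  · simp [h₁]
  · rw [Saux_eq_eval, Int.toNat_of_nonneg (by omega), ← eval_neg, ← Chebyshev.S_neg_sub_two]
    ring_nf

theorem S_sq_add_S_sq (j : ℤ) (z : R) :
    S j z ^ 2 + S (j + 1) z ^ 2 - z * S j z * S (j + 1) z = 1 := by
  simpa [S_eq_eval] using congrArg (eval z) (Chebyshev.S_sq_add_S_sq R j)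

end ChebyshevLike

theorem sq_S_sub_one_le {z : ℝ} (hz : |z| ≤ 2) (n : ℤ) : S (n - 1) z ^ 2 ≤ n ^ 2 :=
  sq_le_sq.2 (by simpa [S_eq_eval] using Chebyshev.abs_eval_S_real_le hz (n - 1))

theorem abs_S_mul_S_sub_one_le {z : ℝ} (hz : |z| ≤ 2) (m : ℕ) :
    |S (m : ℤ) z * S ((m : ℤ) - 1) z| ≤ m * (m + 1) := by
  rw [abs_mul, mul_comm (m : ℝ), S_eq_eval, S_eq_eval]
  exact mul_le_mul (by simpa using Chebyshev.abs_eval_S_real_natCast_le hz m)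
    (by simpa using Chebyshev.abs_eval_S_real_le hz (m - 1)) (abs_nonneg _) (by positivity)

theorem riley_root_sq_mul_eq_one {R : Type*} [CommRing R] {x y a b u v lam alp : R}
    (hab : b ^ 2 + a ^ 2 - y * b * a = 1) (huv : v ^ 2 + u ^ 2 - lam * v * u = 1)
    (hlam : lam = x ^ 2 - y - (y - 2) * (y + 2 - x ^ 2) * a * b)
    (halp : alp = 1 + (y + 2 - x ^ 2) * b * (a - b)) (hroot : u * alp - v = 0) :
    u ^ 2 * ((y + 2 - x ^ 2) * (1 - (2 - y) * (a * b)) * (1 + (y + 2 - x ^ 2) * (a * b))) = 1 := by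
  have hc : (a - b) ^ 2 = 1 - (2 - y) * (a * b) := by linear_combination hab
  have hlam' : lam = 2 - (y + 2 - x ^ 2) * (a - b) ^ 2 := by rw [hlam, hc]; ring
  rw [← hc]
  subst hlam' halp
  -- With `v = u * alp`, the relation `huv` reads `u ^ 2 * (1 + alp ^ 2 - lam * alp) = 1`.
  linear_combination huv + (u * (1 + (y + 2 - x ^ 2) * b * (a - b)) + v
    - (2 - (y + 2 - x ^ 2) * (a - b) ^ 2) * u) * hroot

section Estimates

variable {w q p ε B : ℝ}

theorem mul_one_sub_mul_mul_one_add_mul_nonpos (hw : w ≤ 0) (hwq : 0 ≤ w + q)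
    (hqp : 0 ≤ 1 - q * p) : w * (1 - q * p) * (1 + w * p) ≤ 0 := by
  have h : 0 ≤ 1 + w * p := by
    rcases le_total 0 p with hp | hp
    · nlinarith [mul_le_mul_of_nonneg_right (show -q ≤ w by linarith) hp]
    · nlinarith [mul_nonneg_of_nonpos_of_nonpos hw hp]
  exact mul_nonpos_of_nonpos_of_nonneg (mul_nonpos_of_nonpos_of_nonneg hw hqp) h

theorem one_sub_mul_le_one_add_mul (hq : 0 ≤ q) (hqε : q ≤ ε) (hp : |p| ≤ B) :
    1 - q * p ≤ 1 + ε * B := by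
  nlinarith [neg_abs_le p, abs_nonneg p, mul_le_mul hqε hp (abs_nonneg p) (hq.trans hqε)]

theorem mul_one_sub_mul_le (hw : 0 ≤ w) (hwε : w ≤ ε) (hq : 0 ≤ q) (hqε : q ≤ ε)
    (hp : |p| ≤ B) : w * (1 - q * p) ≤ ε * (1 + ε * B) := by
  have hB : 0 ≤ 1 + ε * B :=
    add_nonneg zero_le_one (mul_nonneg (hw.trans hwε) ((abs_nonneg p).trans hp))
  exact (mul_le_mul_of_nonneg_left (one_sub_mul_le_one_add_mul hq hqε hp) hw).trans
    (mul_le_mul_of_nonneg_right hwε hB)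

theorem mul_one_sub_mul_mul_one_add_mul_le (hw : 0 ≤ w) (hwε : w ≤ ε) (hq : 0 ≤ q)
    (hqε : q ≤ ε) (hp : |p| ≤ B) (hqp : 0 ≤ 1 - q * p) :
    w * (1 - q * p) * (1 + w * p) ≤ ε * (1 + ε * B) := by
  have h : (1 - q * p) * (1 + w * p) ≤ 1 + ε * B := by
    rcases le_total 0 p with hp₀ | hp₀
    · calc (1 - q * p) * (1 + w * p) ≤ 1 * (1 + w * p) := by gcongr; nlinarith
        _ ≤ 1 + ε * B := by
          simpa using one_sub_mul_le_one_add_mul hw hwε (p := -p) (by rwa [abs_neg])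
    · calc (1 - q * p) * (1 + w * p) ≤ (1 - q * p) * 1 := by gcongr; nlinarith
        _ ≤ 1 + ε * B := by simpa using one_sub_mul_le_one_add_mul hq hqε hp
  have hB : 0 ≤ 1 + ε * B :=
    add_nonneg zero_le_one (mul_nonneg (hw.trans hwε) ((abs_nonneg p).trans hp))
  rw [mul_assoc]
  exact (mul_le_mul_of_nonneg_left h hw).trans (mul_le_mul_of_nonneg_right hwε hB)

end Estimates

theorem sub_sq_mul_lt_four {x D : ℝ} (hD : 0 < D) (hx : 2 * √(1 - 1 / D) < |x|) :
    (4 - x ^ 2) * D < 4 := by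
  have hx₀ : 0 < |x| / 2 := by linarith [Real.sqrt_nonneg (1 - 1 / D)]
  have h := (Real.sqrt_lt' hx₀).1 (show √(1 - 1 / D) < |x| / 2 by linarith)
  rw [div_pow, sq_abs, sub_lt_iff_lt_add, ← sub_lt_iff_lt_add'] at h
  have := mul_lt_mul_of_pos_right h hD
  rw [one_div, sub_mul, inv_mul_cancel₀ hD.ne'] at this
  linarith

theorem sq_mul_mul_one_add_mul_lt_one {n B ε : ℝ} (hn : n ≠ 0) (hB : 0 ≤ B) (hε : 0 ≤ ε)
    (hεD : ε * (2 * n ^ 2 + 2 * |n| * √(4 * B + n ^ 2)) < 4) :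
    n ^ 2 * (ε * (1 + ε * B)) < 1 := by
  set s := √(4 * B + n ^ 2)
  set D := 2 * n ^ 2 + 2 * |n| * s
  have hs : s ^ 2 = 4 * B + n ^ 2 := Real.sq_sqrt (by positivity)
  have hn₂ : 0 < n ^ 2 := by positivity
  have hD : 0 < D := by positivity
  -- `D` is the positive root of `D ^ 2 = 4 n ^ 2 (D + 4 B)`.
  have hD₂ : D ^ 2 = 4 * n ^ 2 * (D + 4 * B) := by
    linear_combination 4 * s ^ 2 * sq_abs n + 4 * n ^ 2 * hs
  have hεD₀ : 0 < D + ε * D * B := by positivity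
  calc n ^ 2 * (ε * (1 + ε * B)) = n ^ 2 * (ε * D * (D + ε * D * B)) / D ^ 2 := by
        field_simp
    _ < n ^ 2 * (4 * (D + 4 * B)) / D ^ 2 := by
        refine div_lt_div_of_pos_right (mul_lt_mul_of_pos_left ?_ hn₂) (by positivity)
        calc ε * D * (D + ε * D * B) < 4 * (D + ε * D * B) := by gcongr
          _ ≤ 4 * (D + 4 * B) := by gcongr
    _ = 1 := by rw [hD₂]; field_simp

theorem stmt13_general (m : ℕ) (n : ℤ) (hn : n ≠ 0) (x y lam alp : ℝ)
    (hlam : lam = x ^ 2 - y - (y - 2) * (y + 2 - x ^ 2) * S (m : ℤ) y * S ((m : ℤ) - 1) y)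
    (halp : alp = 1 + (y + 2 - x ^ 2) * S ((m : ℤ) - 1) y * (S (m : ℤ) y - S ((m : ℤ) - 1) y))
    (hx2 : |x| ≤ 2)
    (hroot : S (n - 1) lam * alp - S (n - 2) lam = 0)
    (hx : 2 * Real.sqrt (1 - 1 / (2 * (n : ℝ) ^ 2 +
      2 * |(n : ℝ)| * Real.sqrt (4 * (m : ℝ) * ((m : ℝ) + 1) + (n : ℝ) ^ 2))) < |x|) :
    2 < y := by
  have hab := S_sq_add_S_sq ((m : ℤ) - 1) y
  rw [sub_add_cancel] at hab
  have huv := S_sq_add_S_sq (n - 2) lam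
  rw [show n - 2 + 1 = n - 1 by ring] at huv
  have hkey := riley_root_sq_mul_eq_one hab huv hlam halp hroot
  have hc : 0 ≤ 1 - (2 - y) * (S (m : ℤ) y * S ((m : ℤ) - 1) y) := by
    nlinarith [sq_nonneg (S (m : ℤ) y - S ((m : ℤ) - 1) y)]
  by_contra! hy
  set w := y + 2 - x ^ 2
  set p := S (m : ℤ) y * S ((m : ℤ) - 1) y
  set ε := 4 - x ^ 2
  have hε : 0 ≤ ε := by nlinarith [sq_abs x, abs_nonneg x]
  rcases le_or_gt w 0 with hw | hw
  · nlinarith [mul_one_sub_mul_mul_one_add_mul_nonpos hw (by linarith) hc,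
      sq_nonneg (S (n - 1) lam)]
  have hp := abs_S_mul_S_sub_one_le (abs_le.2 ⟨by linarith [sq_nonneg x], hy⟩) m
  have hn₁ : (1 : ℝ) ≤ n ^ 2 :=
    (one_le_sq_iff_one_le_abs _).2 (by exact_mod_cast Int.one_le_abs hn)
  have hbound : n ^ 2 * (ε * (1 + ε * (m * (m + 1)))) < 1 :=
    sq_mul_mul_one_add_mul_lt_one (Int.cast_ne_zero.2 hn) (by positivity) hε
      (by rw [← mul_assoc]; exact sub_sq_mul_lt_four (by positivity) hx)
  have hlam₂ : |lam| ≤ 2 := by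
    have := mul_one_sub_mul_le (q := 2 - y) (ε := ε) hw.le (by linarith) (by linarith)
      (by linarith) hp
    exact abs_le.2 ⟨by nlinarith, by nlinarith⟩
  have hF := mul_one_sub_mul_mul_one_add_mul_le (ε := ε) hw.le (by linarith) (by linarith)
    (by linarith) hp hc
  have hG : 0 ≤ ε * (1 + ε * (m * (m + 1))) := by positivity
  nlinarith [mul_le_mul_of_nonneg_left hF (sq_nonneg (S (n - 1) lam)),
    mul_le_mul_of_nonneg_right (sq_S_sub_one_le hlam₂ n) hG]

theorem stmt13 (m : ℕ) (hm : 0 < m) (n : ℤ) (hn : n ≠ 0) (x y lam alp : ℝ)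
    (hlam : lam = x ^ 2 - y - (y - 2) * (y + 2 - x ^ 2) * S (m : ℤ) y * S ((m : ℤ) - 1) y)
    (halp : alp = 1 + (y + 2 - x ^ 2) * S ((m : ℤ) - 1) y * (S (m : ℤ) y - S ((m : ℤ) - 1) y))
    (hx2 : |x| ≤ 2)
    (hroot : S (n - 1) lam * alp - S (n - 2) lam = 0)
    (hx : 2 * Real.sqrt (1 - 1 / (2 * (n : ℝ) ^ 2 +
      2 * |(n : ℝ)| * Real.sqrt (4 * (m : ℝ) * ((m : ℝ) + 1) + (n : ℝ) ^ 2))) < |x|) :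
    2 < y :=
  stmt13_general m n hn x y lam alp hlam halp hx2 hroot hx
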